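/- arXiv:1901.07030 — 2 statements merged into one kernel-verified Lean document; each statement's English description precedes it below -/
import Mathlib

section
/- Let X be a variety over k such that the automorphism group of X (automorphisms of X as a scheme over k) acts transitively on the closed points of X, i.e., for any two closed points x, y of X there exists an automorphism g of X over k with g(x) = y. Then X is rational if and only if X is locally flattenable. -/
/-!
A scheme locally of finite type over a field is Jacobson: every point `x` specializes to a closed
point `y`, and a nonempty flattenable open `U` contains a closed point `z`. An automorphism over
`k` sending `y` to `z` pulls `U` back to a flattenable open containing `y`, hence containing `x`.
-/

open AlgebraicGeometry CategoryTheory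

noncomputable section

abbrev Speck (k : Type) [CommRing k] : Scheme := Spec (CommRingCat.of k)

/-- Affine `n`-space over `k`. -/
abbrev AffSp (k : Type) [CommRing k] (n : ℕ) : Scheme :=
  Spec (CommRingCat.of (MvPolynomial (Fin n) k))

/-- The structure morphism of affine `n`-space over `k`. -/
def AffSp.str (k : Type) [CommRing k] (n : ℕ) : AffSp k n ⟶ Speck k :=
  Spec.map (CommRingCat.ofHom (algebraMap k (MvPolynomial (Fin n) k)))

/-- A variety `X` over `k` (given by its structure morphism `s`) is flattenable if it admits
an open immersion over `k` into some affine space `𝔸ⁿ` over `k`. -/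
def Flattenable (k : Type) [CommRing k] {X : Scheme} (s : X ⟶ Speck k) : Prop :=
  ∃ (n : ℕ) (f : X ⟶ AffSp k n), IsOpenImmersion f ∧ f ≫ AffSp.str k n = s

/-- `X` is locally flattenable if every point has a flattenable open neighbourhood. -/
def LocallyFlattenable (k : Type) [CommRing k] {X : Scheme} (s : X ⟶ Speck k) : Prop :=
  ∀ x : X, ∃ U : X.Opens, x ∈ U ∧ Flattenable k (U.ι ≫ s)

/-- `X` is rational if some nonempty open subscheme of `X` is flattenable. -/
def RationalVariety (k : Type) [CommRing k] {X : Scheme} (s : X ⟶ Speck k) : Prop :=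
  ∃ U : X.Opens, (U : Set X).Nonempty ∧ Flattenable k (U.ι ≫ s)

theorem exists_specializes_mem_closedPoints {X : Type*} [TopologicalSpace X] [JacobsonSpace X]
    (x : X) : ∃ y ∈ closedPoints X, x ⤳ y := by
  obtain ⟨y, hxy, hy⟩ := nonempty_inter_closedPoints (Z := closure {x}) ⟨x, subset_closure rfl⟩
    isClosed_closure.isLocallyClosed
  exact ⟨y, hy, specializes_iff_mem_closure.mpr hxy⟩

namespace Flattenable

variable {k : Type} [CommRing k] {X Y : Scheme}

theorem of_isOpenImmersion {s : X ⟶ Speck k} (h : Flattenable k s) (e : Y ⟶ X)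
    [IsOpenImmersion e] : Flattenable k (e ≫ s) := by
  obtain ⟨n, f, hf, hfs⟩ := h
  exact ⟨n, e ≫ f, inferInstance, by rw [Category.assoc, hfs]⟩

theorem preimage {s : X ⟶ Speck k} {U : X.Opens} (h : Flattenable k (U.ι ≫ s)) (f : Y ⟶ X)
    [IsOpenImmersion f] : Flattenable k ((f ⁻¹ᵁ U).ι ≫ f ≫ s) := by
  simpa only [← morphismRestrict_ι_assoc] using h.of_isOpenImmersion (f ∣_ U)

end Flattenable

theorem LocallyFlattenable.rationalVariety {k : Type} [CommRing k] {X : Scheme}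
    {s : X ⟶ Speck k} [Nonempty X] (h : LocallyFlattenable k s) : RationalVariety k s :=
  let ⟨U, hxU, hU⟩ := h (Classical.arbitrary X)
  ⟨U, ⟨_, hxU⟩, hU⟩

theorem RationalVariety.locallyFlattenable {k : Type} [CommRing k] {X : Scheme}
    {s : X ⟶ Speck k} [JacobsonSpace X]
    (htrans : ∀ x y : X, IsClosed ({x} : Set X) → IsClosed ({y} : Set X) →
      ∃ g : X ≅ X, g.hom ≫ s = s ∧ g.hom.base x = y)
    (h : RationalVariety k s) : LocallyFlattenable k s := by
  obtain ⟨U, hUne, hU⟩ := h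
  intro x
  obtain ⟨y, hy, hxy⟩ := exists_specializes_mem_closedPoints x
  obtain ⟨z, hzU, hz⟩ := nonempty_inter_closedPoints hUne U.2.isLocallyClosed
  obtain ⟨g, hgs, hgyz⟩ := htrans y z hy hz
  have hyU : y ∈ g.hom ⁻¹ᵁ U := by simpa [Scheme.Hom.mem_preimage, hgyz] using hzU
  refine ⟨g.hom ⁻¹ᵁ U, hxy.mem_open (g.hom ⁻¹ᵁ U).2 hyU, ?_⟩
  simpa only [hgs] using hU.preimage g.hom

theorem stmt0_general (k : Type) [Field k]
    (X : Scheme) (s : X ⟶ Speck k) [IsIntegral X]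
    (hft : LocallyOfFiniteType s)
    (htrans : ∀ x y : X, IsClosed ({x} : Set X) → IsClosed ({y} : Set X) →
      ∃ g : X ≅ X, g.hom ≫ s = s ∧ g.hom.base x = y) :
    RationalVariety k s ↔ LocallyFlattenable k s :=
  have : JacobsonSpace X := LocallyOfFiniteType.jacobsonSpace s
  ⟨RationalVariety.locallyFlattenable htrans, LocallyFlattenable.rationalVariety⟩

/-- if the automorphism group of a variety `X` over `k` acts transitively on the
closed points of `X`, then `X` is rational iff it is locally flattenable. -/
theorem stmt0 (k : Type) [Field k] [IsAlgClosed k] [CharZero k]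
    (X : Scheme) (s : X ⟶ Speck k) [IsIntegral X]
    (hft : LocallyOfFiniteType s) (hqc : QuasiCompact s)
    (htrans : ∀ x y : X, IsClosed ({x} : Set X) → IsClosed ({y} : Set X) →
      ∃ g : X ≅ X, g.hom ≫ s = s ∧ g.hom.base x = y) :
    RationalVariety k s ↔ LocallyFlattenable k s :=
  stmt0_general k X s hft htrans
end
end

section
/- Let Z be a variety over k which is locally flattenable, let X be a variety over k, and let φ : X → Z be a surjective morphism of schemes over k which is a locally trivial fibration with fiber 𝔸ⁿ, meaning: for every point z of Z there exist an open neighbourhood U of z in Z and an isomorphism of schemes over U between φ⁻¹(U) and the fiber product U ×ₖ 𝔸ⁿ. Then X is locally flattenable. -/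
/-!
Near `φ x`, intersect a trivializing open `U` with a flattenable open `V ↪ 𝔸ᵐ`. Then
`φ⁻¹(U ∩ V)` is an open subscheme of `(U ∩ V) ×ₖ 𝔸ⁿ`, which is open in
`𝔸ᵐ ×ₖ 𝔸ⁿ ≅ 𝔸ᵐ⁺ⁿ`, and open immersions compose.
-/

open AlgebraicGeometry CategoryTheory CategoryTheory.Limits

noncomputable section

open TensorProduct

def MvPolynomial.finTensorAlgEquiv (k : Type) [CommRing k] (m n : ℕ) :
    MvPolynomial (Fin m) k ⊗[k] MvPolynomial (Fin n) k ≃ₐ[k] MvPolynomial (Fin (m + n)) k :=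
  (tensorEquivSum k (Fin m) (Fin n) k).trans (renameEquiv k finSumFinEquiv)

namespace AffSp

def pullbackIso (k : Type) [CommRing k] (m n : ℕ) :
    pullback (str k m) (str k n) ≅ AffSp k (m + n) :=
  pullbackSpecIso k _ _ ≪≫ (Scheme.Spec.mapIso
    (MvPolynomial.finTensorAlgEquiv k m n).toRingEquiv.toCommRingCatIso.op).symm

lemma pullbackIso_hom_str (k : Type) [CommRing k] (m n : ℕ) :
    (pullbackIso k m n).hom ≫ str k (m + n) = pullback.fst (str k m) (str k n) ≫ str k m := by
  unfold pullbackIso str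
  rw [Iso.trans_hom, Category.assoc, ← pullbackSpecIso_hom_base]
  congr 1
  simp only [Iso.symm_hom, Functor.mapIso_inv, Iso.op_inv, Scheme.Spec_map, Quiver.Hom.unop_op,
    RingEquiv.toCommRingCatIso_inv, ← Spec.map_comp, ← CommRingCat.ofHom_comp]
  congr 2
  ext x
  exact (MvPolynomial.finTensorAlgEquiv k m n).symm.commutes x

end AffSp

namespace Flattenable

variable {k : Type} [CommRing k]

lemma comp_isOpenImmersion {X Y : Scheme} {s : X ⟶ Speck k} (h : Flattenable k s)
    (g : Y ⟶ X) [IsOpenImmersion g] : Flattenable k (g ≫ s) := by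
  obtain ⟨m, f, hf, rfl⟩ := h
  exact ⟨m, g ≫ f, inferInstance, Category.assoc _ _ _⟩

lemma pullback_fst_affSp {X : Scheme} {s : X ⟶ Speck k} (h : Flattenable k s) (n : ℕ) :
    Flattenable k (pullback.fst s (AffSp.str k n) ≫ s) := by
  obtain ⟨m, f, hf, rfl⟩ := h
  refine ⟨m + n, pullback.map _ _ _ _ f (𝟙 _) (𝟙 _) (by simp) (by simp) ≫
    (AffSp.pullbackIso k m n).hom, inferInstance, ?_⟩
  rw [Category.assoc, AffSp.pullbackIso_hom_str, pullback.lift_fst_assoc, Category.assoc]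

end Flattenable

lemma exists_isOpenImmersion_of_le_of_trivialization {X Z S F : Scheme} {φ : X ⟶ Z}
    {s : Z ⟶ S} {p : F ⟶ S} {U V : Z.Opens} (hVU : V ≤ U)
    (e : (φ ⁻¹ᵁ U : Scheme) ≅ pullback (U.ι ≫ s) p)
    (he : e.hom ≫ pullback.fst _ _ ≫ U.ι = (φ ⁻¹ᵁ U).ι ≫ φ) :
    ∃ u : (φ ⁻¹ᵁ V : Scheme) ⟶ pullback (V.ι ≫ s) p,
      IsOpenImmersion u ∧ u ≫ pullback.fst _ _ ≫ V.ι = (φ ⁻¹ᵁ V).ι ≫ φ := by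
  let i := X.homOfLE (φ.preimage_mono hVU)
  let j := pullback.map (V.ι ≫ s) p (U.ι ≫ s) p (Z.homOfLE hVU) (𝟙 _) (𝟙 _) (by simp) (by simp)
  have hcond : (φ ∣_ V) ≫ V.ι ≫ s = (i ≫ e.hom ≫ pullback.snd _ _) ≫ p := by
    rw [Category.assoc, Category.assoc, ← pullback.condition, reassoc_of% he,
      Scheme.homOfLE_ι_assoc, morphismRestrict_ι_assoc]
  obtain ⟨u, hu_fst, hu_snd⟩ : ∃ u : (φ ⁻¹ᵁ V : Scheme) ⟶ pullback (V.ι ≫ s) p,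
      u ≫ pullback.fst _ _ = φ ∣_ V ∧ u ≫ pullback.snd _ _ = i ≫ e.hom ≫ pullback.snd _ _ :=
    ⟨pullback.lift _ _ hcond, pullback.lift_fst _ _ _, pullback.lift_snd _ _ _⟩
  have huj : u ≫ j = i ≫ e.hom := by
    apply pullback.hom_ext
    · rw [← cancel_mono U.ι]
      simp only [j, i, Category.assoc]
      rw [pullback.lift_fst_assoc, Category.assoc, Scheme.homOfLE_ι, reassoc_of% hu_fst,
        morphismRestrict_ι, he, Scheme.homOfLE_ι_assoc]
    · simp only [j, Category.assoc]
      rw [pullback.lift_snd, Category.comp_id, hu_snd]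
  have : IsOpenImmersion (u ≫ j) := huj ▸ inferInstance
  exact ⟨u, .of_comp u j, by rw [reassoc_of% hu_fst, morphismRestrict_ι]⟩

theorem stmt1_general (k : Type) [Field k] (n : ℕ)
    (X Z : Scheme) (sZ : Z ⟶ Speck k)
    (φ : X ⟶ Z)
    (htriv : ∀ z : Z, ∃ (U : Z.Opens) (_ : z ∈ U)
      (e : ((φ ⁻¹ᵁ U) : Scheme) ≅ pullback (U.ι ≫ sZ) (AffSp.str k n)),
        e.hom ≫ pullback.fst (U.ι ≫ sZ) (AffSp.str k n) ≫ U.ι = (φ ⁻¹ᵁ U).ι ≫ φ)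
    (hZ : LocallyFlattenable k sZ) :
    LocallyFlattenable k (φ ≫ sZ) := by
  intro x
  obtain ⟨U, hxU, e, he⟩ := htriv (φ.base x)
  obtain ⟨V, hxV, hV⟩ := hZ (φ.base x)
  have hUV : Flattenable k ((U ⊓ V).ι ≫ sZ) := by
    simpa using hV.comp_isOpenImmersion (Z.homOfLE inf_le_right)
  obtain ⟨u, hu, hu_fst⟩ := exists_isOpenImmersion_of_le_of_trivialization inf_le_left e he
  refine ⟨φ ⁻¹ᵁ (U ⊓ V), ⟨hxU, hxV⟩, ?_⟩
  have h := (hUV.pullback_fst_affSp n).comp_isOpenImmersion u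
  rwa [reassoc_of% hu_fst] at h

/-- if `φ : X → Z` is a surjective, locally trivial fibration with fiber `𝔸ⁿ`
(trivialized by isomorphisms over the base), and `Z` is locally flattenable, then `X` is
locally flattenable. -/
theorem stmt1 (k : Type) [Field k] [IsAlgClosed k] [CharZero k] (n : ℕ)
    (X Z : Scheme) (sZ : Z ⟶ Speck k)
    [IsIntegral X] [IsIntegral Z]
    (hftZ : LocallyOfFiniteType sZ) (hqcZ : QuasiCompact sZ)
    (φ : X ⟶ Z)
    (hftX : LocallyOfFiniteType (φ ≫ sZ)) (hqcX : QuasiCompact (φ ≫ sZ))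
    (hsurj : Function.Surjective φ.base)
    (htriv : ∀ z : Z, ∃ (U : Z.Opens) (_ : z ∈ U)
      (e : ((φ ⁻¹ᵁ U) : Scheme) ≅ pullback (U.ι ≫ sZ) (AffSp.str k n)),
        e.hom ≫ pullback.fst (U.ι ≫ sZ) (AffSp.str k n) ≫ U.ι = (φ ⁻¹ᵁ U).ι ≫ φ)
    (hZ : LocallyFlattenable k sZ) :
    LocallyFlattenable k (φ ≫ sZ) :=
  stmt1_general k n X Z sZ φ htriv hZ
end
end
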